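/- arXiv:2603.20070 — 2 statements merged into one kernel-verified Lean document; each statement's English description precedes it below -/
import Mathlib

section
/- For multivariate probabilist's Hermite polynomials: if Z ∼ N(0, I_N) and μ ∈ ℝ^N, then for any multi-indices α, β ∈ ℕ^N, E[H_α(μ+Z) H_β(μ+Z)] = Σ_{r ≤ min(α,β)} r! C(α,r) C(β,r) μ^{α+β-2r}, where the minimum and binomial coefficients are taken componentwise. -/
/-!
Coordinatewise, the translation identity h_n(y + z) = ∑ᵢ C(n,i) y^(n-i) h_i(z) is Taylor's formula,
because (h_n) is an Appell sequence: h_n' = n h_{n-1}, so the Hasse derivatives are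
D_k h_n = C(n,k) h_{n-k}. Expanding both factors and using orthogonality
E[h_i(Z) h_j(Z)] = i! δ_ij leaves ∑_r r! C(a,r) C(b,r) y^(a+b-2r). Orthogonality itself comes from
Gaussian integration by parts: multiplication by x minus differentiation, which maps h_n to
h_{n+1}, is adjoint to differentiation in L²(γ). Finally H_α(μ + Z) H_β(μ + Z) factors over the
coordinates and the law of Z is a product measure, so Fubini turns the expectation into a product
of one-dimensional ones, whose expansion is the stated sum.
-/

open MeasureTheory

/-- Multivariate probabilist's Hermite polynomial H_α(x) = ∏ⱼ h_{αⱼ}(xⱼ). -/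
noncomputable def hermiteMV {N : ℕ} (α : Fin N → ℕ) (x : Fin N → ℝ) : ℝ :=
  ∏ j, (Polynomial.aeval (x j) (Polynomial.hermite (α j)) : ℝ)

open Polynomial Finset ProbabilityTheory
open scoped Nat NNReal

namespace Polynomial

theorem derivative_hermite (n : ℕ) : derivative (hermite n) = n * hermite (n - 1) := by
  induction n with
  | zero => simp
  | succ n ih =>
    rw [hermite_succ, derivative_sub, derivative_mul, derivative_X, one_mul, ih]
    rcases n with _ | n
    · simp
    · simp only [derivative_mul, derivative_natCast, zero_mul, zero_add, Nat.add_sub_cancel,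
        hermite_succ n]
      push_cast
      ring

theorem hasseDeriv_hermite (k n : ℕ) :
    hasseDeriv k (hermite n) = (n.choose k : ℤ[X]) * hermite (n - k) := by
  induction k with
  | zero => simp
  | succ k ih =>
    -- `D₁ (D_k h_n) = (k + 1) • D_{k+1} h_n`, and `k + 1` cancels since `ℤ[X]` is torsion-free
    have h := congr($(hasseDeriv_comp 1 k) (hermite n))
    simp only [LinearMap.comp_apply, hasseDeriv_one, ih, LinearMap.smul_apply,
      Nat.choose_one_right, derivative_mul, derivative_natCast, zero_mul, zero_add,
      derivative_hermite, Nat.sub_sub] at h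
    rw [add_comm 1 k] at h
    apply smul_right_injective ℤ[X] (Nat.succ_ne_zero k)
    dsimp only
    rw [← h, nsmul_eq_mul, ← mul_assoc, ← mul_assoc]
    congr 1
    norm_cast
    rw [Nat.succ_eq_add_one, mul_comm (k + 1), Nat.choose_succ_right_eq, mul_comm]

theorem hasseDeriv_map {R S : Type*} [Semiring R] [Semiring S] (f : R →+* S) (k : ℕ) (p : R[X]) :
    hasseDeriv k (p.map f) = (hasseDeriv k p).map f := by
  ext n
  simp [hasseDeriv_coeff]

theorem aeval_add_hermite {A : Type*} [CommRing A] (x y : A) (n : ℕ) :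
    aeval (y + x) (hermite n) =
      ∑ i ∈ range (n + 1), (n.choose i : A) * y ^ (n - i) * aeval x (hermite i) := by
  have hdeg : ((hermite n).map (algebraMap ℤ A)).natDegree < n + 1 :=
    Nat.lt_succ_of_le (natDegree_map_le.trans natDegree_hermite.le)
  rw [← eval_map_algebraMap, ← taylor_eval,
    eval_eq_sum_range' ((natDegree_taylor _ x).trans_lt hdeg), ← sum_range_reflect]
  refine sum_congr rfl fun i hi => ?_
  have hin : i ≤ n := Nat.lt_succ_iff.mp (mem_range.mp hi)
  rw [taylor_coeff, hasseDeriv_map, hasseDeriv_hermite, Polynomial.map_mul, eval_mul,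
    eval_map_algebraMap, eval_map_algebraMap, Nat.add_sub_cancel, Nat.sub_sub_self hin,
    Nat.choose_symm hin, map_natCast]
  ring

end Polynomial

namespace ProbabilityTheory

variable {m : ℝ} {v : ℝ≥0}

theorem integrable_eval_gaussianReal (q : ℝ[X]) :
    Integrable (fun x ↦ q.eval x) (gaussianReal m v) := by
  simp_rw [eval_eq_sum_range]
  refine integrable_finsetSum _ fun i _ ↦ Integrable.const_mul ?_ _
  exact integrable_pow_of_mem_interior_integrableExpSet (by simp) i

theorem integrable_aeval_gaussianReal {R : Type*} [CommSemiring R] [Algebra R ℝ] (p : R[X]) :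
    Integrable (fun x ↦ aeval x p) (gaussianReal m v) := by
  simpa only [eval_map_algebraMap] using integrable_eval_gaussianReal (p.map (algebraMap R ℝ))

theorem integrable_eval_mul_gaussianPDFReal (hv : v ≠ 0) (q : ℝ[X]) :
    Integrable (fun x ↦ q.eval x * gaussianPDFReal m v x) := by
  have h := integrable_eval_gaussianReal (m := m) (v := v) q
  rw [gaussianReal_of_var_ne_zero _ hv, integrable_withDensity_iff_integrable_smul'
    (measurable_gaussianPDF m v) (ae_of_all _ fun _ ↦ gaussianPDF_lt_top)] at h
  simpa [toReal_gaussianPDF, mul_comm] using h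

theorem hasDerivAt_gaussianPDFReal (x : ℝ) :
    HasDerivAt (gaussianPDFReal m v) (-(x - m) / v * gaussianPDFReal m v x) x := by
  have hexponent : HasDerivAt (fun y ↦ -(y - m) ^ 2 / (2 * v)) (-(x - m) / v) x := by
    refine ((((hasDerivAt_id x).sub_const m).pow 2).neg.div_const (2 * (v : ℝ))).congr_deriv ?_
    simp only [id, Nat.cast_ofNat, Nat.add_one_sub_one, pow_one, mul_one]
    ring
  rw [gaussianPDFReal_def]
  exact (hexponent.exp.const_mul _).congr_deriv (by ring)

/-- Stein's identity, for polynomial test functions. -/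
theorem integral_sub_mul_eval_gaussianReal (q : ℝ[X]) :
    ∫ x, (x - m) * q.eval x ∂gaussianReal m v =
      v * ∫ x, (derivative q).eval x ∂gaussianReal m v := by
  rcases eq_or_ne v 0 with rfl | hv
  · simp [gaussianReal_zero_var]
  have hibp := integral_mul_deriv_eq_deriv_mul_of_integrable (u := fun x ↦ q.eval x)
    (v := gaussianPDFReal m v) (u' := fun x ↦ (derivative q).eval x)
    (v' := fun x ↦ -(x - m) / v * gaussianPDFReal m v x)
    (fun x _ ↦ q.hasDerivAt x) (fun x _ ↦ hasDerivAt_gaussianPDFReal x)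
    (((integrable_eval_mul_gaussianPDFReal hv ((X - C m) * q)).const_mul (-(v : ℝ)⁻¹)).congr
      (ae_of_all _ fun x ↦ by simp only [eval_mul, eval_sub, eval_X, eval_C, Pi.mul_apply]; ring))
    (integrable_eval_mul_gaussianPDFReal hv (derivative q))
    (integrable_eval_mul_gaussianPDFReal hv q)
  simp only [integral_gaussianReal_eq_integral_smul hv, smul_eq_mul]
  calc ∫ x, gaussianPDFReal m v x * ((x - m) * q.eval x)
      = -v * ∫ x, q.eval x * (-(x - m) / v * gaussianPDFReal m v x) := by
        rw [← integral_const_mul]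
        congr 1 with x
        field_simp
    _ = v * ∫ x, gaussianPDFReal m v x * (derivative q).eval x := by
        rw [hibp]
        simp only [mul_comm (gaussianPDFReal m v _)]
        ring

theorem integral_eval_X_mul_sub_derivative_mul (p q : ℝ[X]) :
    ∫ x, (X * p - derivative p).eval x * q.eval x ∂gaussianReal 0 1 =
      ∫ x, p.eval x * (derivative q).eval x ∂gaussianReal 0 1 := by
  have hstein := integral_sub_mul_eval_gaussianReal (m := 0) (v := 1) (p * q)
  simp only [sub_zero, NNReal.coe_one, one_mul, derivative_mul, eval_add] at hstein
  rw [integral_add (integrable_eval_gaussianReal _) (integrable_eval_gaussianReal _)] at hstein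
  calc ∫ x, (X * p - derivative p).eval x * q.eval x ∂gaussianReal 0 1
      = ∫ x, ((X * (p * q)).eval x - (derivative p * q).eval x) ∂gaussianReal 0 1 := by
        congr with x
        simp only [eval_mul, eval_sub, eval_X]
        ring
    _ = ∫ x, (X * (p * q)).eval x ∂gaussianReal 0 1 -
          ∫ x, (derivative p * q).eval x ∂gaussianReal 0 1 :=
        integral_sub (integrable_eval_gaussianReal _) (integrable_eval_gaussianReal _)
    _ = ∫ x, p.eval x * (derivative q).eval x ∂gaussianReal 0 1 := by
        simp only [eval_mul, eval_X] at hstein ⊢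
        rw [hstein, add_sub_cancel_left]

theorem integral_aeval_hermite_succ_mul (a : ℕ) (q : ℝ[X]) :
    ∫ x, aeval x (hermite (a + 1)) * q.eval x ∂gaussianReal 0 1 =
      ∫ x, aeval x (hermite a) * (derivative q).eval x ∂gaussianReal 0 1 := by
  simpa only [← eval_map_algebraMap, hermite_succ, Polynomial.map_sub, Polynomial.map_mul, map_X,
    derivative_map] using
    integral_eval_X_mul_sub_derivative_mul ((hermite a).map (algebraMap ℤ ℝ)) q

theorem integral_aeval_hermite_mul_aeval_hermite (a b : ℕ) :
    ∫ x, aeval x (hermite a) * aeval x (hermite b) ∂gaussianReal 0 1 =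
      if a = b then (a ! : ℝ) else 0 := by
  induction a generalizing b with
  | zero =>
    rcases b with _ | b
    · simp
    · simpa [mul_comm] using integral_aeval_hermite_succ_mul b 1
  | succ a ih =>
    simp only [← eval_map_algebraMap (hermite b), integral_aeval_hermite_succ_mul]
    simp only [derivative_map, derivative_hermite, Polynomial.map_mul, map_natCast, eval_mul,
      eval_map_algebraMap, mul_left_comm (aeval _ (hermite a)) (b : ℝ)]
    rw [integral_const_mul, ih]
    rcases b with _ | b
    · simp
    · simp only [Nat.add_sub_cancel, add_left_inj, Nat.factorial_succ]
      split_ifs with hab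
      · subst hab
        push_cast
        ring
      · simp

theorem integral_aeval_hermite_add_mul_aeval_hermite_add (a b : ℕ) (y : ℝ) :
    ∫ z, aeval (y + z) (hermite a) * aeval (y + z) (hermite b) ∂gaussianReal 0 1 =
      ∑ r : Fin (min a b + 1),
        ((r : ℕ)! : ℝ) * a.choose r * b.choose r * y ^ (a + b - 2 * (r : ℕ)) := by
  have hterm : ∀ i j, ∫ z, (a.choose i * y ^ (a - i) * aeval z (hermite i)) *
      (b.choose j * y ^ (b - j) * aeval z (hermite j)) ∂gaussianReal 0 1 =
      if i = j then (i ! : ℝ) * a.choose i * b.choose i * y ^ (a - i) * y ^ (b - i) else 0 := by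
    intro i j
    simp only [mul_mul_mul_comm _ (aeval _ (hermite i))]
    rw [integral_const_mul, integral_aeval_hermite_mul_aeval_hermite]
    split_ifs with hij
    · subst hij; ring
    · rw [mul_zero]
  have hint : ∀ i j, Integrable (fun z ↦ (a.choose i * y ^ (a - i) * aeval z (hermite i)) *
      (b.choose j * y ^ (b - j) * aeval z (hermite j))) (gaussianReal 0 1) := by
    intro i j
    simp only [mul_mul_mul_comm _ (aeval _ (hermite i)), ← map_mul]
    exact (integrable_aeval_gaussianReal _).const_mul _
  simp only [aeval_add_hermite, sum_mul_sum]
  rw [integral_finsetSum _ fun i _ ↦ integrable_finsetSum _ fun j _ ↦ hint i j]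
  simp only [integral_finsetSum _ fun j _ ↦ hint _ j, hterm, sum_ite_eq, sum_ite_mem,
    range_inter_range]
  rw [min_add_add_right, sum_range]
  refine sum_congr rfl fun r _ ↦ ?_
  rw [mul_assoc, ← pow_add]
  congr 2
  omega

end ProbabilityTheory

/-- **Expectation of shifted products of Hermite polynomials.** If Z ∼ N(0,I_N)
and μ ∈ ℝ^N, then for multi-indices α, β,
E[H_α(μ+Z)H_β(μ+Z)] = Σ_{r ≤ min(α,β)} r! C(α,r) C(β,r) μ^{α+β−2r},
with the minimum, factorials, binomial coefficients and powers componentwise. -/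
theorem hermiteMV_shifted_product {N : ℕ} (α β : Fin N → ℕ) (μ : Fin N → ℝ) :
    (∫ z, hermiteMV α (fun j => μ j + z j) * hermiteMV β (fun j => μ j + z j)
        ∂(Measure.pi fun _ : Fin N => ProbabilityTheory.gaussianReal 0 1)) =
      ∑ r : (∀ j, Fin (min (α j) (β j) + 1)),
        ∏ j, (((r j : ℕ).factorial : ℝ) * ((α j).choose (r j : ℕ) : ℝ) *
              ((β j).choose (r j : ℕ) : ℝ) * μ j ^ (α j + β j - 2 * (r j : ℕ))) := by
  simp only [hermiteMV, ← prod_mul_distrib]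
  rw [integral_fintype_prod_eq_prod (f := fun j t ↦
    aeval (μ j + t) (hermite (α j)) * aeval (μ j + t) (hermite (β j)))]
  simp only [integral_aeval_hermite_add_mul_aeval_hermite_add]
  rw [prod_univ_sum, Fintype.piFinset_univ]
end

section
/- Truncated exponential moment error: let V be a random variable with finite moments up to order 2D+2, D ∈ ℕ, C > 0, and let q(CD) be the e^{-CD}-quantile of |V| (so P(|V| > q(CD)) ≤ e^{-CD}). Denote exp_{≤D}(v) = Σ_{k=0}^D v^k/k!. Then |E[V exp_{≤D}(V)] − E[V e^V 1_{|V| ≤ q(CD)}]| ≤ e^{q(CD)} ‖V‖_{D+2}^{D+2}/(D+1)! + e^{-CD/2} Σ_{k=0}^D ‖V‖_{2k+2}^{k+1}/k!, where ‖V‖_p = (E|V|^p)^{1/p}. -/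
/-!
Split at the event `E = {|V| ≤ q}`, `q = q(CD)`. On `E` the integrand `V (exp_{≤D} V - e^V)` is `V`
times the tail of the exponential series, which is at most `|V|^{D+1} e^{|V|}/(D+1)! ≤
|V|^{D+1} e^q/(D+1)!`. On the complement only the polynomial `V exp_{≤D} V` survives; by
Cauchy–Schwarz against the indicator of `Eᶜ` each monomial contributes at most
`‖V‖_{2k+2}^{k+1} P(Eᶜ)^{1/2}/k!`, and right continuity of the distribution function of `|V|`
gives `P(Eᶜ) ≤ e^{-CD}`.
-/

open MeasureTheory

/-- The e^{-t}-quantile function q(t) = inf{y : P(X ≤ y) ≥ 1 − e^{-t}}. -/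
noncomputable def quantileFn {Ω : Type*} [MeasurableSpace Ω] (μ : MeasureTheory.Measure Ω)
    (X : Ω → ℝ) (t : ℝ) : ℝ :=
  sInf {y : ℝ | 1 - Real.exp (-t) ≤ (μ {ω | X ω ≤ y}).toReal}

/-- The Lᵖ-norm ‖V‖_p = (E|V|^p)^{1/p}. -/
noncomputable def lpNormR {Ω : Type*} [MeasurableSpace Ω] (μ : MeasureTheory.Measure Ω)
    (V : Ω → ℝ) (p : ℕ) : ℝ :=
  (∫ ω, |V ω| ^ p ∂μ) ^ ((1 : ℝ) / p)

/-- The degree-D truncation of the exponential, exp_{≤D}(v) = Σ_{k=0}^D v^k/k!. -/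
noncomputable def expTrunc (D : ℕ) (v : ℝ) : ℝ :=
  ∑ k ∈ Finset.range (D + 1), v ^ k / (k.factorial : ℝ)

open ProbabilityTheory Filter Topology Finset

lemma Real.abs_exp_sub_sum_range_le (N : ℕ) (v : ℝ) :
    |Real.exp v - ∑ k ∈ range N, v ^ k / k.factorial| ≤ |v| ^ N / N.factorial * Real.exp |v| := by
  have hexp : ∀ x : ℝ, HasSum (fun n : ℕ => x ^ n / n.factorial) (Real.exp x) := fun x => by
    rw [Real.exp_eq_exp_ℝ, NormedSpace.exp_eq_tsum_div]
    exact (Real.summable_pow_div_factorial x).hasSum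
  have htail : Real.exp v - ∑ k ∈ range N, v ^ k / k.factorial
      = ∑' n : ℕ, v ^ (n + N) / (n + N).factorial := by
    rw [(hexp v).tsum_eq.symm, ← (hexp v).summable.sum_add_tsum_nat_add N]
    ring
  have hterm : ∀ n : ℕ, ‖v ^ (n + N) / ((n + N).factorial : ℝ)‖ ≤
      |v| ^ N / N.factorial * (|v| ^ n / n.factorial) := fun n => by
    rw [Real.norm_eq_abs, abs_div, abs_pow, Nat.abs_cast, div_mul_div_comm, ← pow_add, add_comm N n]
    gcongr
    exact_mod_cast Nat.le_of_dvd (Nat.factorial_pos _)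
      (add_comm n N ▸ Nat.factorial_mul_factorial_dvd_factorial_add N n)
  rw [htail]
  exact tsum_of_norm_bounded ((hexp |v|).mul_left _) hterm

lemma StieltjesFunction.le_apply_sInf_setOf_le (f : StieltjesFunction ℝ) {c : ℝ}
    (hne : {y | c ≤ f y}.Nonempty) (hbdd : BddBelow {y | c ≤ f y}) :
    c ≤ f (sInf {y | c ≤ f y}) := by
  refine ge_of_tendsto ((f.right_continuous _).mono Set.Ioi_subset_Ici_self) ?_
  filter_upwards [self_mem_nhdsWithin] with y hy
  obtain ⟨s, hs, hsy⟩ := (csInf_lt_iff hbdd hne).1 hy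
  exact hs.trans (f.mono hsy.le)

section Quantile

variable {Ω : Type*} [MeasurableSpace Ω] {μ : Measure Ω} [IsProbabilityMeasure μ] {X : Ω → ℝ}

lemma cdf_map_apply (hX : Measurable X) (y : ℝ) : cdf (μ.map X) y = μ.real {ω | X ω ≤ y} := by
  have := Measure.isProbabilityMeasure_map (μ := μ) hX.aemeasurable
  rw [cdf_eq_real, measureReal_def, Measure.map_apply hX measurableSet_Iic]
  rfl

lemma one_sub_exp_neg_le_measureReal_le_quantileFn (hX : Measurable X) (t : ℝ) :
    1 - Real.exp (-t) ≤ μ.real {ω | X ω ≤ quantileFn μ X t} := by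
  rcases le_or_gt t 0 with ht | ht
  · linarith [Real.one_le_exp (neg_nonneg.2 ht), measureReal_nonneg (μ := μ)
      (s := {ω | X ω ≤ quantileFn μ X t})]
  set F := cdf (μ.map X)
  have hq : quantileFn μ X t = sInf {y | 1 - Real.exp (-t) ≤ F y} := by
    simp only [quantileFn, F, cdf_map_apply hX, measureReal_def]
  have hlt : 1 - Real.exp (-t) < 1 := by linarith [Real.exp_pos (-t)]
  have hpos : 0 < 1 - Real.exp (-t) := by linarith [Real.exp_lt_one_iff.2 (neg_neg_of_pos ht)]
  have hne : {y | 1 - Real.exp (-t) ≤ F y}.Nonempty :=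
    ((tendsto_cdf_atTop _).eventually (eventually_ge_nhds hlt)).exists
  obtain ⟨y₀, hy₀⟩ := ((tendsto_cdf_atBot _).eventually (eventually_lt_nhds hpos)).exists
  have hbdd : BddBelow {y | 1 - Real.exp (-t) ≤ F y} :=
    ⟨y₀, fun y hy => (F.mono.reflect_lt (hy₀.trans_le hy)).le⟩
  rw [hq, ← cdf_map_apply hX]
  exact F.le_apply_sInf_setOf_le hne hbdd

lemma measureReal_compl_setOf_le_quantileFn_le (hX : Measurable X) (t : ℝ) :
    μ.real {ω | X ω ≤ quantileFn μ X t}ᶜ ≤ Real.exp (-t) := by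
  rw [probReal_compl_eq_one_sub (measurableSet_le hX measurable_const)]
  linarith [one_sub_exp_neg_le_measureReal_le_quantileFn (μ := μ) hX t]

end Quantile

lemma mul_expTrunc_eq_sum (D : ℕ) (v : ℝ) :
    v * expTrunc D v = ∑ k ∈ range (D + 1), v ^ (k + 1) / k.factorial := by
  rw [expTrunc, mul_sum]
  exact sum_congr rfl fun k _ => by rw [pow_succ]; ring

lemma abs_mul_expTrunc_le (D : ℕ) (v : ℝ) :
    |v * expTrunc D v| ≤ ∑ k ∈ range (D + 1), |v| ^ (k + 1) / k.factorial := by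
  rw [mul_expTrunc_eq_sum]
  refine (abs_sum_le_sum_abs _ _).trans_eq (sum_congr rfl fun k _ => ?_)
  rw [abs_div, abs_pow, Nat.abs_cast]

lemma abs_mul_expTrunc_sub_mul_exp_le (D : ℕ) (v : ℝ) :
    |v * expTrunc D v - v * Real.exp v| ≤ |v| ^ (D + 2) / (D + 1).factorial * Real.exp |v| := by
  have h := Real.abs_exp_sub_sum_range_le (D + 1) v
  rw [← expTrunc] at h
  calc |v * expTrunc D v - v * Real.exp v| = |v| * |Real.exp v - expTrunc D v| := by
        rw [← abs_mul, ← abs_neg]; congr 1; ring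
    _ ≤ |v| * (|v| ^ (D + 1) / (D + 1).factorial * Real.exp |v|) := by gcongr
    _ = |v| ^ (D + 2) / (D + 1).factorial * Real.exp |v| := by ring

lemma continuous_mul_expTrunc (D : ℕ) : Continuous fun v => v * expTrunc D v := by
  unfold expTrunc
  fun_prop

lemma lpNormR_pow_self {Ω : Type*} [MeasurableSpace Ω] (μ : Measure Ω) (V : Ω → ℝ) {p : ℕ}
    (hp : p ≠ 0) : lpNormR μ V p ^ p = ∫ ω, |V ω| ^ p ∂μ := by
  rw [lpNormR, ← Real.rpow_natCast, ← Real.rpow_mul (integral_nonneg fun ω => by positivity),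
    one_div_mul_cancel (Nat.cast_ne_zero.2 hp), Real.rpow_one]

lemma lpNormR_two_mul_add_two_pow {Ω : Type*} [MeasurableSpace Ω] (μ : Measure Ω) (V : Ω → ℝ)
    (k : ℕ) : lpNormR μ V (2 * k + 2) ^ (k + 1) = √(∫ ω, |V ω| ^ (2 * k + 2) ∂μ) := by
  rw [lpNormR, ← Real.rpow_natCast, ← Real.rpow_mul (integral_nonneg fun ω => by positivity),
    Real.sqrt_eq_rpow]
  congr 1
  field_simp
  push_cast
  ring

lemma setIntegral_le_sqrt_integral_sq_mul_sqrt_measureReal {Ω : Type*} [MeasurableSpace Ω]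
    {μ : Measure Ω} [IsFiniteMeasure μ] {f : Ω → ℝ} (hf₀ : 0 ≤ f) (hf : MemLp f 2 μ)
    (s : Set Ω) : ∫ ω in s, f ω ∂μ ≤ √(∫ ω, f ω ^ 2 ∂μ) * √(μ.real s) := by
  have h := integral_mul_le_Lp_mul_Lq_of_nonneg (μ := μ.restrict s) Real.HolderConjugate.two_two
    (ae_of_all _ hf₀) (ae_of_all _ fun _ => zero_le_one)
    (by simpa using hf.restrict s) (by simpa using memLp_const (1 : ℝ))
  simp only [mul_one, one_pow, Real.rpow_two, setIntegral_const, smul_eq_mul,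
    ← Real.sqrt_eq_rpow] at h
  refine h.trans (mul_le_mul_of_nonneg_right (Real.sqrt_le_sqrt ?_) (Real.sqrt_nonneg _))
  exact setIntegral_le_integral hf.integrable_sq (ae_of_all _ fun _ => sq_nonneg _)

lemma integral_sub_setIntegral_eq {Ω : Type*} [MeasurableSpace Ω] {μ : Measure Ω}
    {f g : Ω → ℝ} {s : Set Ω} (hs : MeasurableSet s) (hf : Integrable f μ)
    (hg : IntegrableOn g s μ) :
    ∫ ω, f ω ∂μ - ∫ ω in s, g ω ∂μ = ∫ ω in s, (f ω - g ω) ∂μ + ∫ ω in sᶜ, f ω ∂μ := by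
  rw [← integral_add_compl hs hf, integral_sub hf.integrableOn hg]
  ring

section MomentBounds

variable {Ω : Type*} [MeasurableSpace Ω] {μ : Measure Ω} {V : Ω → ℝ} (D : ℕ)

lemma integrable_mul_expTrunc (hV : AEStronglyMeasurable V μ)
    (hmom : ∀ p ≤ D + 1, Integrable (fun ω => |V ω| ^ p) μ) :
    Integrable (fun ω => V ω * expTrunc D (V ω)) μ :=
  (integrable_finsetSum _ fun k hk => (hmom (k + 1) (by rw [mem_range] at hk; omega)).div_const _).mono'
    ((continuous_mul_expTrunc D).comp_aestronglyMeasurable hV)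
    (ae_of_all _ fun ω => abs_mul_expTrunc_le D (V ω))

lemma integrableOn_mul_exp_setOf_abs_le [IsFiniteMeasure μ] (hV : Measurable V) (q : ℝ) :
    IntegrableOn (fun ω => V ω * Real.exp (V ω)) {ω | |V ω| ≤ q} μ := by
  refine (integrable_const (q * Real.exp q)).mono'
    (hV.mul (Real.measurable_exp.comp hV)).aestronglyMeasurable.restrict
    (ae_restrict_of_forall_mem (measurableSet_le hV.abs measurable_const) fun ω hω => ?_)
  have hω : |V ω| ≤ q := hω
  rw [Real.norm_eq_abs, abs_mul, Real.abs_exp]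
  exact mul_le_mul hω (Real.exp_le_exp.2 ((le_abs_self _).trans hω)) (Real.exp_pos _).le
    ((abs_nonneg _).trans hω)

lemma abs_setIntegral_mul_expTrunc_sub_mul_exp_le (hV : Measurable V)
    (hmom : Integrable (fun ω => |V ω| ^ (D + 2)) μ) (q : ℝ) :
    |∫ ω in {ω | |V ω| ≤ q}, (V ω * expTrunc D (V ω) - V ω * Real.exp (V ω)) ∂μ| ≤
      Real.exp q * lpNormR μ V (D + 2) ^ (D + 2) / (D + 1).factorial := by
  have hB : Integrable (fun ω => |V ω| ^ (D + 2) / (D + 1).factorial * Real.exp q) μ :=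
    (hmom.div_const _).mul_const _
  have hpt : ∀ ω ∈ {ω | |V ω| ≤ q}, ‖V ω * expTrunc D (V ω) - V ω * Real.exp (V ω)‖ ≤
      |V ω| ^ (D + 2) / (D + 1).factorial * Real.exp q := fun ω hω =>
    (abs_mul_expTrunc_sub_mul_exp_le D (V ω)).trans (by gcongr; exact hω)
  calc _ ≤ ∫ ω in {ω | |V ω| ≤ q}, |V ω| ^ (D + 2) / (D + 1).factorial * Real.exp q ∂μ :=
        norm_integral_le_of_norm_le hB.integrableOn
          (ae_restrict_of_forall_mem (measurableSet_le hV.abs measurable_const) hpt)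
    _ ≤ ∫ ω, |V ω| ^ (D + 2) / (D + 1).factorial * Real.exp q ∂μ :=
        setIntegral_le_integral hB (ae_of_all _ fun _ => by positivity)
    _ = _ := by
        rw [integral_mul_const, integral_div, lpNormR_pow_self μ V (by omega)]
        ring

lemma abs_setIntegral_mul_expTrunc_le [IsFiniteMeasure μ]
    (hmom : ∀ p ≤ 2 * D + 2, Integrable (fun ω => |V ω| ^ p) μ) (s : Set Ω) :
    |∫ ω in s, V ω * expTrunc D (V ω) ∂μ| ≤
      √(μ.real s) * ∑ k ∈ range (D + 1), lpNormR μ V (2 * k + 2) ^ (k + 1) / k.factorial := by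
  have hint : ∀ k ∈ range (D + 1), Integrable (fun ω => |V ω| ^ (k + 1)) μ :=
    fun k hk => hmom (k + 1) (by rw [mem_range] at hk; omega)
  have hsq : ∀ k : ℕ, (fun ω => (|V ω| ^ (k + 1)) ^ 2) = fun ω => |V ω| ^ (2 * k + 2) :=
    fun k => funext fun ω => by ring
  have hL2 : ∀ k ∈ range (D + 1), MemLp (fun ω => |V ω| ^ (k + 1)) 2 μ := fun k hk =>
    (memLp_two_iff_integrable_sq (hint k hk).aestronglyMeasurable).2
      (hsq k ▸ hmom _ (by rw [mem_range] at hk; omega))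
  calc _ ≤ ∫ ω in s, ∑ k ∈ range (D + 1), |V ω| ^ (k + 1) / k.factorial ∂μ :=
        norm_integral_le_of_norm_le (f := fun ω => V ω * expTrunc D (V ω))
          (integrable_finsetSum _ fun k hk => (hint k hk).div_const _).integrableOn
          (ae_of_all _ fun ω => abs_mul_expTrunc_le D (V ω))
    _ = ∑ k ∈ range (D + 1), (∫ ω in s, |V ω| ^ (k + 1) ∂μ) / k.factorial := by
        rw [integral_finsetSum _ fun k hk => ((hint k hk).div_const _).integrableOn]
        simp_rw [integral_div]
    _ ≤ ∑ k ∈ range (D + 1), √(∫ ω, |V ω| ^ (2 * k + 2) ∂μ) * √(μ.real s) / k.factorial := by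
        gcongr with k hk
        have h := setIntegral_le_sqrt_integral_sq_mul_sqrt_measureReal
          (fun ω => by positivity) (hL2 k hk) s
        rwa [hsq] at h
    _ = _ := by
        simp_rw [mul_sum, lpNormR_two_mul_add_two_pow]
        exact sum_congr rfl fun k _ => by ring

end MomentBounds

theorem trunc_exp_moment_error_general
    {Ω : Type*} [MeasurableSpace Ω] (μ : Measure Ω) [IsProbabilityMeasure μ]
    (V : Ω → ℝ) (hV : Measurable V) (D : ℕ) (C : ℝ)
    (hmom : ∀ p : ℕ, p ≤ 2 * D + 2 → Integrable (fun ω => |V ω| ^ p) μ) :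
    |(∫ ω, V ω * expTrunc D (V ω) ∂μ) -
        ∫ ω in {ω' | |V ω'| ≤ quantileFn μ (fun ω' => |V ω'|) (C * D)},
          V ω * Real.exp (V ω) ∂μ|
      ≤ Real.exp (quantileFn μ (fun ω' => |V ω'|) (C * D)) *
          lpNormR μ V (D + 2) ^ (D + 2) / ((D + 1).factorial : ℝ)
        + Real.exp (-(C * D) / 2) *
          ∑ k ∈ Finset.range (D + 1), lpNormR μ V (2 * k + 2) ^ (k + 1) / (k.factorial : ℝ) := by
  set q := quantileFn μ (fun ω' => |V ω'|) (C * D)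
  have htail : √(μ.real {ω | |V ω| ≤ q}ᶜ) ≤ Real.exp (-(C * D) / 2) := by
    rw [Real.exp_half]
    exact Real.sqrt_le_sqrt (measureReal_compl_setOf_le_quantileFn_le hV.abs _)
  rw [integral_sub_setIntegral_eq (measurableSet_le hV.abs measurable_const)
    (integrable_mul_expTrunc D hV.aestronglyMeasurable fun p hp => hmom p (by omega))
    (integrableOn_mul_exp_setOf_abs_le hV q)]
  refine (abs_add_le _ _).trans (add_le_add ?_ ?_)
  · exact abs_setIntegral_mul_expTrunc_sub_mul_exp_le D hV (hmom (D + 2) (by omega)) q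
  · refine (abs_setIntegral_mul_expTrunc_le D hmom _).trans ?_
    gcongr
    exact sum_nonneg fun k _ => by rw [lpNormR_two_mul_add_two_pow]; positivity

/-- **Truncated exponential moment error.** For a random variable V with finite
moments up to order 2D+2, C > 0, and q(CD) the e^{-CD}-quantile of |V|,
|E[V exp_{≤D}(V)] − E[V e^V 1_{|V| ≤ q(CD)}]|
  ≤ e^{q(CD)} ‖V‖_{D+2}^{D+2}/(D+1)! + e^{-CD/2} Σ_{k=0}^D ‖V‖_{2k+2}^{k+1}/k!. -/
theorem trunc_exp_moment_error
    {Ω : Type*} [MeasurableSpace Ω] (μ : Measure Ω) [IsProbabilityMeasure μ]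
    (V : Ω → ℝ) (hV : Measurable V) (D : ℕ) (C : ℝ) (hC : 0 < C)
    (hmom : ∀ p : ℕ, p ≤ 2 * D + 2 → Integrable (fun ω => |V ω| ^ p) μ) :
    |(∫ ω, V ω * expTrunc D (V ω) ∂μ) -
        ∫ ω in {ω' | |V ω'| ≤ quantileFn μ (fun ω' => |V ω'|) (C * D)},
          V ω * Real.exp (V ω) ∂μ|
      ≤ Real.exp (quantileFn μ (fun ω' => |V ω'|) (C * D)) *
          lpNormR μ V (D + 2) ^ (D + 2) / ((D + 1).factorial : ℝ)
        + Real.exp (-(C * D) / 2) *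
          ∑ k ∈ Finset.range (D + 1), lpNormR μ V (2 * k + 2) ^ (k + 1) / (k.factorial : ℝ) :=
  trunc_exp_moment_error_general μ V hV D C hmom
end
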